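/- Let K ⊂ ℝⁿ be a compact basic semi-algebraic set K = {x ∈ ℝⁿ : g_j(x) ≥ 0, j = 1,…,m}, and assume there exists N > 0 such that the polynomial N − ‖X‖² belongs to the quadratic module Q(g) generated by g_1,…,g_m. Let μ be a finite Borel measure on K with moment sequence z = (z_α), and let y = (y_α) be a real sequence. Then y has a representing Borel measure ν on K that is uniformly absolutely continuous with respect to μ if and only if there exists a scalar κ such that 0 ≤ L_y(f² g_j) ≤ κ L_z(f² g_j) for every polynomial f ∈ ℝ[X] and every j = 0,1,…,m (with the convention g_0 ≡ 1). -/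

import Mathlib

open MeasureTheory MvPolynomial

/-- The Riesz functional `L_y` of a sequence `y = (y_α)`:
`f = Σ_α f_α X^α ↦ Σ_α f_α y_α`. -/
noncomputable def rieszFunctional {n : ℕ} (y : (Fin n →₀ ℕ) → ℝ)
    (f : MvPolynomial (Fin n) ℝ) : ℝ :=
  ∑ α ∈ f.support, f.coeff α * y α

/-- Membership in the quadratic module `Q(g)` generated by `g_1,…,g_m`:
`p = u_0 + Σ_j u_j g_j` with each `u_j` a sum of squares. -/
def memQuadraticModule {n m : ℕ} (g : Fin m → MvPolynomial (Fin n) ℝ)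
    (p : MvPolynomial (Fin n) ℝ) : Prop :=
  ∃ (u₀ : MvPolynomial (Fin n) ℝ) (u : Fin m → MvPolynomial (Fin n) ℝ),
    IsSumSq u₀ ∧ (∀ j, IsSumSq (u j)) ∧ p = u₀ + ∑ j, u j * g j

/-!
For `q ≥ 0` on `K` and a density `0 ≤ h ≤ C`, one has `0 ≤ ∫ q h dμ ≤ C ∫ q dμ`, which gives the
forward direction. Conversely, `L_y` is a positive functional, so Cauchy–Schwarz gives
`L_y(p)² ≤ L_y(p²) L_y(1) ≤ κ L_y(1) ∫ p² dμ`: `L_y` is bounded for the `L²(μ)` norm and hence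
(Hahn–Banach, Riesz) `L_y(p) = ∫ H p dμ` for some `H ∈ L²(μ)`. Both `H` and `κ - H` integrate
nonnegatively against every `p²`; by Stone–Weierstrass the `p²` approximate every nonnegative
continuous function uniformly on `K`, and continuous functions approximate indicators in `L¹`, so
`0 ≤ H ≤ κ` almost everywhere and `ν = H μ` is the required measure.
-/

open Set Filter
open scoped ENNReal

section RieszFunctional

variable {n : ℕ}

noncomputable def rieszLinearMap (y : (Fin n →₀ ℕ) → ℝ) : MvPolynomial (Fin n) ℝ →ₗ[ℝ] ℝ :=
  (basisMonomials (Fin n) ℝ).constr ℝ y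

theorem rieszLinearMap_apply (y : (Fin n →₀ ℕ) → ℝ) (p : MvPolynomial (Fin n) ℝ) :
    rieszLinearMap y p = rieszFunctional y p := by
  rw [rieszLinearMap, Module.Basis.constr_apply]
  rfl

theorem rieszFunctional_monomial_one (y : (Fin n →₀ ℕ) → ℝ) (α : Fin n →₀ ℕ) :
    rieszFunctional y (monomial α 1) = y α := by
  simp [rieszFunctional, support_monomial]

theorem eval_monomial_one (α : Fin n →₀ ℕ) (x : Fin n → ℝ) :
    eval x (monomial α (1 : ℝ)) = ∏ i, x i ^ α i := by
  rw [eval_monomial, one_mul, Finsupp.prod_pow]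

end RieszFunctional

theorem LinearMap.sq_le_map_sq_mul_map_one {A : Type*} [CommRing A] [Algebra ℝ A]
    (L : A →ₗ[ℝ] ℝ) (hL : ∀ a, 0 ≤ L (a ^ 2)) (a : A) : L a ^ 2 ≤ L (a ^ 2) * L 1 := by
  have hquad : ∀ t : ℝ, 0 ≤ L 1 * (t * t) + 2 * L a * t + L (a ^ 2) := fun t => by
    have hexp : (a + algebraMap ℝ A t) ^ 2 = a ^ 2 + (2 * t) • a + (t * t) • 1 := by
      simp only [Algebra.smul_def, map_mul, map_ofNat, mul_one]
      ring
    have h := hL (a + algebraMap ℝ A t)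
    rw [hexp, map_add, map_add, map_smul, map_smul, smul_eq_mul, smul_eq_mul] at h
    linarith
  have := discrim_le_zero hquad
  rw [discrim] at this
  nlinarith

theorem exists_inner_eq_of_abs_le_mul_norm {V E : Type*} [AddCommGroup V] [Module ℝ V]
    [NormedAddCommGroup E] [InnerProductSpace ℝ E] [CompleteSpace E]
    (ι : V →ₗ[ℝ] E) (L : V →ₗ[ℝ] ℝ) {c : ℝ} (hL : ∀ v, |L v| ≤ c * ‖ι v‖) :
    ∃ w : E, ∀ v, inner ℝ w (ι v) = L v := by
  have hker : LinearMap.ker ι ≤ LinearMap.ker L := fun v hv => by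
    have := hL v
    rw [LinearMap.mem_ker] at hv ⊢
    rwa [hv, norm_zero, mul_zero, abs_nonpos_iff] at this
  let ψ : LinearMap.range ι →ₗ[ℝ] ℝ :=
    (Submodule.liftQ _ L hker).comp ι.quotKerEquivRange.symm.toLinearMap
  have hψ : ∀ v, ψ ⟨ι v, LinearMap.mem_range_self ι v⟩ = L v := fun v => by
    have : ι.quotKerEquivRange.symm ⟨ι v, LinearMap.mem_range_self ι v⟩ =
        Submodule.Quotient.mk v := by
      rw [LinearEquiv.symm_apply_eq]
      exact Subtype.ext (ι.quotKerEquivRange_apply_mk v).symm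
    simp only [ψ, LinearMap.comp_apply, LinearEquiv.coe_toLinearMap, this, Submodule.liftQ_apply]
  have hψc : ∀ u, ‖ψ u‖ ≤ c * ‖u‖ := by
    rintro ⟨_, v, rfl⟩
    rw [hψ]
    exact hL v
  obtain ⟨Φ, hΦ, -⟩ := exists_extension_norm_eq _ (ψ.mkContinuous c hψc)
  refine ⟨(InnerProductSpace.toDual ℝ E).symm Φ, fun v => ?_⟩
  rw [InnerProductSpace.toDual_symm_apply, hΦ ⟨ι v, LinearMap.mem_range_self ι v⟩,
    LinearMap.mkContinuous_apply, hψ]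

theorem exists_memLp_integral_mul_eq {α V : Type*} [MeasurableSpace α] {μ : Measure α}
    [AddCommGroup V] [Module ℝ V] (F : V →ₗ[ℝ] α → ℝ) (hF : ∀ v, MemLp (F v) 2 μ)
    (L : V →ₗ[ℝ] ℝ) {c : ℝ} (hL : ∀ v, L v ^ 2 ≤ c * ∫ x, F v x ^ 2 ∂μ) :
    ∃ H : α → ℝ, MemLp H 2 μ ∧ ∀ v, ∫ x, H x * F v x ∂μ = L v := by
  let ι : V →ₗ[ℝ] Lp ℝ 2 μ :=
    { toFun := fun v => (hF v).toLp
      map_add' := fun u v => by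
        simp_rw [← MemLp.toLp_add]
        exact MemLp.toLp_congr _ _ (.of_eq (map_add F u v))
      map_smul' := fun a v => by
        simp_rw [RingHom.id_apply, ← MemLp.toLp_const_smul]
        exact MemLp.toLp_congr _ _ (.of_eq (map_smul F a v)) }
  have hinner : ∀ (H : Lp ℝ 2 μ) v, inner ℝ H (ι v) = ∫ x, H x * F v x ∂μ := fun H v => by
    rw [L2.inner_def]
    refine integral_congr_ae ?_
    filter_upwards [(hF v).coeFn_toLp] with x hx
    simp [ι, hx, mul_comm]
  have hnorm : ∀ v, ∫ x, F v x ^ 2 ∂μ = ‖ι v‖ ^ 2 := fun v => by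
    rw [← real_inner_self_eq_norm_sq, L2.inner_def]
    refine integral_congr_ae ?_
    filter_upwards [(hF v).coeFn_toLp] with x hx
    simp [ι, hx, sq]
  obtain ⟨w, hw⟩ := exists_inner_eq_of_abs_le_mul_norm ι L (c := √c) fun v => by
    rw [← Real.sqrt_sq (norm_nonneg (ι v)), ← Real.sqrt_mul' _ (sq_nonneg _), ← hnorm]
    exact Real.abs_le_sqrt (hL v)
  exact ⟨w, Lp.memLp w, fun v => by rw [← hinner, hw]⟩

/-- Approximate `1_s` in `L¹(|G| μ)` by bounded continuous functions. -/
theorem ae_nonneg_of_forall_integral_mul_nonneg {α : Type*} [TopologicalSpace α]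
    [TopologicalSpace.PseudoMetrizableSpace α] [MeasurableSpace α] [BorelSpace α]
    {μ : Measure α} {G : α → ℝ} (hG : Integrable G μ)
    (htest : ∀ φ : α → ℝ, Continuous φ → 0 ≤ φ → 0 ≤ ∫ x, G x * φ x ∂μ) : 0 ≤ᵐ[μ] G := by
  refine ae_nonneg_of_forall_setIntegral_nonneg hG fun s hs _ => ?_
  let ν := μ.withDensity fun x => ‖G x‖ₑ
  have : IsFiniteMeasure ν := isFiniteMeasure_withDensity hG.2.ne
  let χ := s.indicator fun _ => (1 : ℝ)
  have hχ : Measurable χ := measurable_const.indicator hs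
  refine le_of_forall_pos_le_add fun ε hε => ?_
  have hχν : Integrable χ ν := (integrable_const 1).indicator hs
  obtain ⟨g, hg, -⟩ := hχν.exists_boundedContinuous_lintegral_sub_le (ENNReal.ofReal_pos.2 hε).ne'
  let φ := fun x => max (g x) 0
  have hGφ : Integrable (fun x => G x * φ x) μ := by
    refine hG.mul_bdd (c := ‖g‖) (g.continuous.max continuous_const).aestronglyMeasurable
      (ae_of_all _ fun x => ?_)
    rw [Real.norm_of_nonneg (le_max_right _ _)]
    exact max_le ((le_abs_self _).trans (g.norm_coe_le_norm x)) (norm_nonneg _)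
  have hpt : ∀ x, ‖s.indicator G x - G x * φ x‖ₑ ≤ ‖G x‖ₑ * ‖χ x - g x‖ₑ := fun x => by
    have hχφ : |χ x - φ x| ≤ |χ x - g x| := by
      have hχ0 : max (χ x) 0 = χ x := max_eq_left (indicator_nonneg (fun _ _ => zero_le_one) x)
      simpa only [hχ0] using abs_max_sub_max_le_abs (χ x) (g x) 0
    rw [show s.indicator G x - G x * φ x = G x * (χ x - φ x) by
      by_cases hx : x ∈ s <;> simp [χ, hx, mul_sub], enorm_mul]
    gcongr
    simp only [Real.enorm_eq_ofReal_abs]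
    exact ENNReal.ofReal_le_ofReal hχφ
  have hclose : ‖∫ x in s, G x ∂μ - ∫ x, G x * φ x ∂μ‖ₑ ≤ ENNReal.ofReal ε := calc
    _ = ‖∫ x, (s.indicator G x - G x * φ x) ∂μ‖ₑ := by
      rw [← integral_indicator hs, integral_sub (hG.indicator hs) hGφ]
    _ ≤ ∫⁻ x, ‖G x‖ₑ * ‖χ x - g x‖ₑ ∂μ :=
      (enorm_integral_le_lintegral_enorm _).trans (lintegral_mono hpt)
    _ = ∫⁻ x, ‖χ x - g x‖ₑ ∂ν := (lintegral_withDensity_eq_lintegral_mul₀ hG.1.enorm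
      (hχ.sub g.continuous.measurable).enorm.aemeasurable).symm
    _ ≤ ENNReal.ofReal ε := hg
  rw [Real.enorm_eq_ofReal_abs, ENNReal.ofReal_le_ofReal_iff hε.le] at hclose
  linarith [(abs_le.mp hclose).1,
    htest φ (g.continuous.max continuous_const) fun x => le_max_right _ _]

section CompactSupport

variable {α : Type*} [TopologicalSpace α] [MeasurableSpace α] {K : Set α} {μ : Measure α}

theorem Continuous.exists_ae_norm_le (hK : IsCompact K) (hμK : μ Kᶜ = 0) {f : α → ℝ}
    (hf : Continuous f) : ∃ C, ∀ᵐ x ∂μ, ‖f x‖ ≤ C :=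
  let ⟨C, hC⟩ := hK.exists_bound_of_continuousOn hf.continuousOn
  ⟨C, (show ∀ᵐ x ∂μ, x ∈ K from mem_ae_iff.mpr hμK).mono hC⟩

variable [OpensMeasurableSpace α]

theorem Continuous.memLp_of_measure_compl_eq_zero [IsFiniteMeasure μ] (hK : IsCompact K)
    (hμK : μ Kᶜ = 0) {f : α → ℝ} (hf : Continuous f) (p : ℝ≥0∞) : MemLp f p μ :=
  let ⟨C, hC⟩ := hf.exists_ae_norm_le hK hμK
  MemLp.of_bound hf.aestronglyMeasurable C hC

theorem MeasureTheory.Integrable.mul_continuous_of_measure_compl_eq_zero (hK : IsCompact K)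
    (hμK : μ Kᶜ = 0) {G f : α → ℝ} (hG : Integrable G μ) (hf : Continuous f) :
    Integrable (fun x => G x * f x) μ :=
  let ⟨_, hC⟩ := hf.exists_ae_norm_le hK hμK
  hG.mul_bdd hf.aestronglyMeasurable hC

end CompactSupport

section WithDensity

variable {α : Type*} [MeasurableSpace α] {μ : Measure α} {h : α → ℝ}

theorem integral_withDensity_ofReal (hh : AEMeasurable h μ) (hh0 : 0 ≤ᵐ[μ] h) (f : α → ℝ) :
    ∫ x, f x ∂μ.withDensity (fun x => ENNReal.ofReal (h x)) = ∫ x, h x * f x ∂μ := by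
  rw [integral_withDensity_eq_integral_toReal_smul₀ hh.ennreal_ofReal
    (ae_of_all _ fun _ => ENNReal.ofReal_lt_top)]
  refine integral_congr_ae ?_
  filter_upwards [hh0] with x hx
  rw [ENNReal.toReal_ofReal hx, smul_eq_mul]

theorem integral_withDensity_ofReal_mem_Icc (hh : AEMeasurable h μ) {C : ℝ}
    (hC : ∀ᵐ x ∂μ, 0 ≤ h x ∧ h x ≤ C) {f : α → ℝ} (hf0 : 0 ≤ᵐ[μ] f) (hf : Integrable f μ) :
    ∫ x, f x ∂μ.withDensity (fun x => ENNReal.ofReal (h x)) ∈ Icc 0 (C * ∫ x, f x ∂μ) := by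
  rw [integral_withDensity_ofReal hh (hC.mono fun _ hx => hx.1), ← integral_const_mul]
  have hnn : 0 ≤ᵐ[μ] fun x => h x * f x := by
    filter_upwards [hC, hf0] with x hx hfx using mul_nonneg hx.1 hfx
  refine ⟨integral_nonneg_of_ae hnn, integral_mono_of_nonneg hnn (hf.const_mul C) ?_⟩
  filter_upwards [hC, hf0] with x hx hfx using mul_le_mul_of_nonneg_right hx.2 hfx

end WithDensity

section CompactlySupportedMeasure

variable {n : ℕ} {K : Set (Fin n → ℝ)} {μ : Measure (Fin n → ℝ)}

theorem rieszFunctional_eq_integral [IsFiniteMeasure μ] (hK : IsCompact K) (hμK : μ Kᶜ = 0)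
    {w : (Fin n →₀ ℕ) → ℝ} (hw : ∀ α, w α = ∫ x, ∏ i, x i ^ α i ∂μ)
    (p : MvPolynomial (Fin n) ℝ) : rieszFunctional w p = ∫ x, eval x p ∂μ := by
  simp_rw [eval_eq', rieszFunctional, hw]
  have hmono : ∀ α : Fin n →₀ ℕ, Integrable (fun x : Fin n → ℝ => ∏ i, x i ^ α i) μ := fun α =>
    (Continuous.memLp_of_measure_compl_eq_zero hK hμK (by fun_prop) 1).integrable le_rfl
  rw [integral_finsetSum _ fun α _ => (hmono α).const_mul _]
  simp_rw [integral_const_mul]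

/-- Stone–Weierstrass for `√φ`, followed by continuity of squaring in `C(K, ℝ)`. -/
theorem exists_abs_eval_sq_sub_lt (hK : IsCompact K) {φ : (Fin n → ℝ) → ℝ}
    (hφ : Continuous φ) (hφ0 : 0 ≤ φ) {ε : ℝ} (hε : 0 < ε) :
    ∃ p : MvPolynomial (Fin n) ℝ, ∀ x ∈ K, |eval x p ^ 2 - φ x| < ε := by
  have := isCompact_iff_compactSpace.mp hK
  let coord : Fin n → C(K, ℝ) := fun i =>
    ⟨fun x => (x : Fin n → ℝ) i, (continuous_apply i).comp continuous_subtype_val⟩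
  have hcoord : ∀ (p : MvPolynomial (Fin n) ℝ) (x : K),
      aeval coord p x = eval (x : Fin n → ℝ) p := fun p x => by
    rw [← ContinuousMap.evalAlgHom_apply (S := ℝ), ← AlgHom.comp_apply, MvPolynomial.comp_aeval]
    rfl
  let A : Subalgebra ℝ C(K, ℝ) := (aeval coord).range
  have hsep : A.SeparatesPoints := fun x y hxy => by
    obtain ⟨i, hi⟩ : ∃ i, (x : Fin n → ℝ) i ≠ (y : Fin n → ℝ) i := by
      by_contra! h
      exact hxy (Subtype.ext (funext h))
    exact ⟨coord i, ⟨coord i, ⟨X i, aeval_X coord i⟩, rfl⟩, hi⟩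
  let r : C(K, ℝ) := ⟨fun x => √(φ x), by fun_prop⟩
  have hr : r ∈ closure (A : Set C(K, ℝ)) := by
    rw [← A.topologicalClosure_coe,
      ContinuousMap.subalgebra_topologicalClosure_eq_top_of_separatesPoints A hsep]
    trivial
  have hr2 : r ^ 2 ∈ closure ((· ^ 2) '' (A : Set C(K, ℝ))) :=
    map_mem_closure (f := (· ^ 2)) (continuous_pow 2) hr (mapsTo_image _ _)
  obtain ⟨_, ⟨_, ⟨p, rfl⟩, rfl⟩, hdist⟩ := Metric.mem_closure_iff.mp hr2 ε hε
  refine ⟨p, fun x hx => ?_⟩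
  have := (ContinuousMap.dist_apply_le_dist ⟨x, hx⟩).trans_lt hdist
  simpa [Real.dist_eq, hcoord, r, Real.sq_sqrt (hφ0 x), abs_sub_comm] using this

theorem integral_mul_nonneg_of_forall_integral_mul_eval_sq_nonneg (hK : IsCompact K)
    (hμK : μ Kᶜ = 0) {G : (Fin n → ℝ) → ℝ} (hG : Integrable G μ)
    (hsq : ∀ p : MvPolynomial (Fin n) ℝ, 0 ≤ ∫ x, G x * eval x p ^ 2 ∂μ)
    {φ : (Fin n → ℝ) → ℝ} (hφ : Continuous φ) (hφ0 : 0 ≤ φ) : 0 ≤ ∫ x, G x * φ x ∂μ := by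
  set M := ∫ x, |G x| ∂μ
  have hM : 0 ≤ M := integral_nonneg fun x => abs_nonneg _
  refine le_of_forall_pos_le_add fun ε hε => ?_
  obtain ⟨p, hp⟩ := exists_abs_eval_sq_sub_lt hK hφ hφ0 (by positivity : 0 < ε / (M + 1))
  have hclose : |∫ x, G x * eval x p ^ 2 ∂μ - ∫ x, G x * φ x ∂μ| ≤ ε / (M + 1) * M := by
    rw [← integral_sub (hG.mul_continuous_of_measure_compl_eq_zero hK hμK
      (f := fun x => eval x p ^ 2) ((continuous_eval p).pow 2))
      (hG.mul_continuous_of_measure_compl_eq_zero hK hμK hφ), ← integral_const_mul]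
    have hpt : ∀ᵐ x ∂μ, ‖G x * eval x p ^ 2 - G x * φ x‖ ≤ ε / (M + 1) * |G x| := by
      filter_upwards [show ∀ᵐ x ∂μ, x ∈ K from mem_ae_iff.mpr hμK] with x hx
      rw [← mul_sub, Real.norm_eq_abs, abs_mul, mul_comm]
      exact mul_le_mul_of_nonneg_right (hp x hx).le (abs_nonneg _)
    exact norm_integral_le_of_norm_le (hG.abs.const_mul _) hpt
  have hεM : ε / (M + 1) * M ≤ ε := by
    rw [div_mul_eq_mul_div, div_le_iff₀ (by positivity)]
    nlinarith
  linarith [(abs_le.mp hclose).2, hsq p]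

theorem ae_nonneg_of_forall_integral_mul_eval_sq_nonneg (hK : IsCompact K)
    (hμK : μ Kᶜ = 0) {G : (Fin n → ℝ) → ℝ} (hG : Integrable G μ)
    (hsq : ∀ p : MvPolynomial (Fin n) ℝ, 0 ≤ ∫ x, G x * eval x p ^ 2 ∂μ) : 0 ≤ᵐ[μ] G :=
  ae_nonneg_of_forall_integral_mul_nonneg hG fun _ hφ hφ0 =>
    integral_mul_nonneg_of_forall_integral_mul_eval_sq_nonneg hK hμK hG hsq hφ hφ0

theorem exists_density_of_rieszFunctional_sq_le [IsFiniteMeasure μ] (hK : IsCompact K)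
    (hμK : μ Kᶜ = 0) {y : (Fin n →₀ ℕ) → ℝ} {κ : ℝ} (hy : ∀ p : MvPolynomial (Fin n) ℝ,
      0 ≤ rieszFunctional y (p ^ 2) ∧ rieszFunctional y (p ^ 2) ≤ κ * ∫ x, eval x p ^ 2 ∂μ) :
    ∃ H : (Fin n → ℝ) → ℝ, Measurable H ∧ (∀ᵐ x ∂μ, 0 ≤ H x ∧ H x ≤ κ) ∧
      ∀ p : MvPolynomial (Fin n) ℝ, ∫ x, H x * eval x p ∂μ = rieszFunctional y p := by
  let F : MvPolynomial (Fin n) ℝ →ₗ[ℝ] (Fin n → ℝ) → ℝ :=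
    LinearMap.pi fun x => (aeval x).toLinearMap
  have hpos : ∀ p, 0 ≤ rieszLinearMap y (p ^ 2) := fun p => by
    simpa only [rieszLinearMap_apply] using (hy p).1
  have hbound : ∀ p, rieszLinearMap y p ^ 2 ≤ rieszFunctional y 1 * κ * ∫ x, F p x ^ 2 ∂μ :=
    fun p => calc
      _ ≤ rieszFunctional y (p ^ 2) * rieszFunctional y 1 := by
        simpa only [rieszLinearMap_apply] using (rieszLinearMap y).sq_le_map_sq_mul_map_one hpos p
      _ ≤ κ * (∫ x, eval x p ^ 2 ∂μ) * rieszFunctional y 1 := by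
        gcongr
        · simpa using (hy 1).1
        · exact (hy p).2
      _ = _ := by
        simp only [LinearMap.pi_apply, AlgHom.toLinearMap_apply, aeval_eq_eval, F]
        ring
  obtain ⟨H, hH2, hHrep⟩ := exists_memLp_integral_mul_eq F
    (fun p => (continuous_eval p).memLp_of_measure_compl_eq_zero hK hμK 2) _ hbound
  have hH : Integrable H μ := hH2.integrable one_le_two
  have hrep : ∀ p, ∫ x, H x * eval x p ∂μ = rieszFunctional y p := fun p => by
    simpa [F, rieszLinearMap_apply] using hHrep p
  have hsq : ∀ p : MvPolynomial (Fin n) ℝ,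
      ∫ x, H x * eval x p ^ 2 ∂μ = rieszFunctional y (p ^ 2) := fun p => by
    simp_rw [← hrep, map_pow]
  have hH0 : 0 ≤ᵐ[μ] H := ae_nonneg_of_forall_integral_mul_eval_sq_nonneg hK hμK hH
    fun p => hsq p ▸ (hy p).1
  have hHκ : 0 ≤ᵐ[μ] fun x => κ - H x := by
    refine ae_nonneg_of_forall_integral_mul_eval_sq_nonneg hK hμK ((integrable_const κ).sub hH)
      fun p => ?_
    have hp2 : Continuous fun x => eval x p ^ 2 := (continuous_eval p).pow 2
    simp_rw [sub_mul]
    rw [integral_sub ((hp2.memLp_of_measure_compl_eq_zero hK hμK 1).integrable le_rfl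
      |>.const_mul κ) (hH.mul_continuous_of_measure_compl_eq_zero hK hμK hp2),
      integral_const_mul, hsq, sub_nonneg]
    exact (hy p).2
  refine ⟨hH.1.mk H, hH.1.stronglyMeasurable_mk.measurable, ?_, fun p => ?_⟩
  · filter_upwards [hH0, hHκ, hH.1.ae_eq_mk] with x h0 hκ hmk
    rw [← hmk]
    exact ⟨h0, sub_nonneg.mp hκ⟩
  · rw [← hrep]
    refine integral_congr_ae ?_
    filter_upwards [hH.1.ae_eq_mk] with x hx
    rw [hx]

theorem rieszFunctional_mem_Icc_of_withDensity [IsFiniteMeasure μ] (hK : IsCompact K)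
    (hμK : μ Kᶜ = 0) {z : (Fin n →₀ ℕ) → ℝ} (hz : ∀ α, z α = ∫ x, ∏ i, x i ^ α i ∂μ)
    {h : (Fin n → ℝ) → ℝ} (hh : Measurable h) {C : ℝ} (hC : ∀ᵐ x ∂μ, 0 ≤ h x ∧ h x ≤ C)
    {y : (Fin n →₀ ℕ) → ℝ}
    (hy : ∀ α, y α = ∫ x, ∏ i, x i ^ α i ∂μ.withDensity fun x => ENNReal.ofReal (h x))
    {q : MvPolynomial (Fin n) ℝ} (hq : ∀ x ∈ K, 0 ≤ eval x q) :
    rieszFunctional y q ∈ Icc 0 (C * rieszFunctional z q) := by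
  have : IsFiniteMeasure (μ.withDensity fun x => ENNReal.ofReal (h x)) :=
    isFiniteMeasure_withDensity_ofReal (.of_bounded (C := C) (hC.mono fun x hx => by
      rw [Real.norm_of_nonneg hx.1]; exact hx.2))
  rw [rieszFunctional_eq_integral hK (withDensity_absolutelyContinuous _ _ hμK) hy,
    rieszFunctional_eq_integral hK hμK hz]
  exact integral_withDensity_ofReal_mem_Icc hh.aemeasurable hC
    ((show ∀ᵐ x ∂μ, x ∈ K from mem_ae_iff.mpr hμK).mono hq)
    ((continuous_eval q).memLp_of_measure_compl_eq_zero hK hμK 1 |>.integrable le_rfl)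

end CompactlySupportedMeasure

theorem moment_problem_bounded_density_compact_putinar_general
    {n m : ℕ} (g : Fin m → MvPolynomial (Fin n) ℝ)
    (K : Set (Fin n → ℝ))
    (hKdef : K = {x : Fin n → ℝ | ∀ j : Fin m, 0 ≤ eval x (g j)})
    (hK : IsCompact K)
    (μ : Measure (Fin n → ℝ)) [IsFiniteMeasure μ] (hμK : μ Kᶜ = 0)
    (z : (Fin n →₀ ℕ) → ℝ)
    (hz : ∀ α : Fin n →₀ ℕ, z α = ∫ x, ∏ i, x i ^ α i ∂μ)
    (y : (Fin n →₀ ℕ) → ℝ) :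
    (∃ ν : Measure (Fin n → ℝ), ν Kᶜ = 0 ∧
        (∀ α : Fin n →₀ ℕ, y α = ∫ x, ∏ i, x i ^ α i ∂ν) ∧
        ∃ h : (Fin n → ℝ) → ℝ, Measurable h ∧
          ν = μ.withDensity (fun x => ENNReal.ofReal (h x)) ∧
          ∃ C : ℝ, ∀ᵐ x ∂μ, 0 ≤ h x ∧ h x ≤ C) ↔
    (∃ κ : ℝ,
      (∀ f : MvPolynomial (Fin n) ℝ,
        0 ≤ rieszFunctional y (f ^ 2) ∧
        rieszFunctional y (f ^ 2) ≤ κ * rieszFunctional z (f ^ 2)) ∧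
      (∀ (j : Fin m) (f : MvPolynomial (Fin n) ℝ),
        0 ≤ rieszFunctional y (f ^ 2 * g j) ∧
        rieszFunctional y (f ^ 2 * g j) ≤ κ * rieszFunctional z (f ^ 2 * g j))) := by
  constructor
  · rintro ⟨_, -, hy, h, hh, rfl, C, hC⟩
    refine ⟨C, fun f => rieszFunctional_mem_Icc_of_withDensity hK hμK hz hh hC hy fun x _ => ?_,
      fun j f => rieszFunctional_mem_Icc_of_withDensity hK hμK hz hh hC hy fun x hx => ?_⟩
    · simpa using sq_nonneg (eval x f)
    · rw [hKdef] at hx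
      simpa using mul_nonneg (sq_nonneg (eval x f)) (hx j)
  · rintro ⟨κ, hsq, -⟩
    obtain ⟨H, hH, hHκ, hrep⟩ := exists_density_of_rieszFunctional_sq_le hK hμK (y := y) (κ := κ)
      fun p => by simpa [rieszFunctional_eq_integral hK hμK hz] using hsq p
    refine ⟨_, withDensity_absolutelyContinuous _ _ hμK, fun α => ?_, H, hH, rfl, κ, hHκ⟩
    rw [integral_withDensity_ofReal hH.aemeasurable (hHκ.mono fun _ hx => hx.1),
      ← rieszFunctional_monomial_one y α, ← hrep]
    simp_rw [eval_monomial_one]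

/-- **Theorem 3.1(b)** (Lasserre, "The moment problem with bounded density").
Let `K ⊂ ℝⁿ` be a compact basic semi-algebraic set `K = {x : g_j(x) ≥ 0}` such that
`N - ‖X‖² ∈ Q(g)` for some `N > 0`, let `μ` be a finite Borel measure on `K` with moment
sequence `z`, and let `y` be a real sequence.  Then `y` has a representing Borel measure
`ν` on `K` uniformly absolutely continuous with respect to `μ` if and only if there is a
scalar `κ` with `0 ≤ L_y(f² g_j) ≤ κ L_z(f² g_j)` for all polynomials `f` and all
`j = 0,1,…,m` (with `g_0 ≡ 1`). -/
theorem moment_problem_bounded_density_compact_putinar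
    {n m : ℕ} (g : Fin m → MvPolynomial (Fin n) ℝ)
    (K : Set (Fin n → ℝ))
    (hKdef : K = {x : Fin n → ℝ | ∀ j : Fin m, 0 ≤ eval x (g j)})
    (hK : IsCompact K)
    (N : ℝ) (hN : 0 < N)
    (harch : memQuadraticModule g (C N - ∑ i, (X i : MvPolynomial (Fin n) ℝ) ^ 2))
    (μ : Measure (Fin n → ℝ)) [IsFiniteMeasure μ] (hμK : μ Kᶜ = 0)
    (z : (Fin n →₀ ℕ) → ℝ)
    (hz : ∀ α : Fin n →₀ ℕ, z α = ∫ x, ∏ i, x i ^ α i ∂μ)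
    (y : (Fin n →₀ ℕ) → ℝ) :
    (∃ ν : Measure (Fin n → ℝ), ν Kᶜ = 0 ∧
        (∀ α : Fin n →₀ ℕ, y α = ∫ x, ∏ i, x i ^ α i ∂ν) ∧
        ∃ h : (Fin n → ℝ) → ℝ, Measurable h ∧
          ν = μ.withDensity (fun x => ENNReal.ofReal (h x)) ∧
          ∃ C : ℝ, ∀ᵐ x ∂μ, 0 ≤ h x ∧ h x ≤ C) ↔
    (∃ κ : ℝ,
      (∀ f : MvPolynomial (Fin n) ℝ,
        0 ≤ rieszFunctional y (f ^ 2) ∧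
        rieszFunctional y (f ^ 2) ≤ κ * rieszFunctional z (f ^ 2)) ∧
      (∀ (j : Fin m) (f : MvPolynomial (Fin n) ℝ),
        0 ≤ rieszFunctional y (f ^ 2 * g j) ∧
        rieszFunctional y (f ^ 2 * g j) ≤ κ * rieszFunctional z (f ^ 2 * g j))) :=
  moment_problem_bounded_density_compact_putinar_general g K hKdef hK μ hμK z hz y
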